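/- arXiv:2207.09201 — 4 statements merged into one kernel-verified Lean document; each statement's English description precedes it below -/
import Mathlib

section
/- Let c_1, ..., c_m be clauses over Boolean variables x_1, ..., x_n such that no clause contains both (j,+) and (j,-) for any j. Define partial words w_1, ..., w_m in {0,1,DIAMOND}^n by: w_i[j] = 0 if (j,+) is in c_i, w_i[j] = 1 if (j,-) is in c_i, and w_i[j] = DIAMOND otherwise. Then the CNF formula {c_1, ..., c_m} is satisfiable if and only if there exists a word v in {0,1}^n that is not compatible with any of the partial words w_1, ..., w_m. -/
/-- The partial word associated with a clause `c` over variables indexed by `Fin n`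
(literals are pairs `(j, s)` with `s = true` for positive literals):
position `j` is `0` if `(j,+) ∈ c`, `1` if `(j,-) ∈ c`, and `DIAMOND` (here `none`)
otherwise. -/
def clauseWord {n : ℕ} (c : Finset (Fin n × Bool)) (j : Fin n) : Option Bool :=
  if (j, true) ∈ c then some false
  else if (j, false) ∈ c then some true
  else none

/-! A word is compatible with the partial word of a non-tautological clause exactly when, read as
an assignment, it falsifies that clause; so satisfying assignments are the words compatible with
none of the partial words. -/

section

variable {n : ℕ} {c : Finset (Fin n × Bool)}

theorem clauseWord_eq_some_iff (hc : ∀ j : Fin n, ¬((j, true) ∈ c ∧ (j, false) ∈ c))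
    (j : Fin n) (b : Bool) : clauseWord c j = some b ↔ (j, !b) ∈ c := by
  unfold clauseWord
  by_cases hpos : (j, true) ∈ c
  · have hneg : (j, false) ∉ c := fun h => hc j ⟨hpos, h⟩
    cases b <;> simp [hpos, hneg]
  · by_cases hneg : (j, false) ∈ c <;> cases b <;> simp [hpos, hneg]

theorem compatible_clauseWord_iff_falsifies (hc : ∀ j : Fin n, ¬((j, true) ∈ c ∧ (j, false) ∈ c))
    (v : Fin n → Bool) :
    (∀ j : Fin n, ∀ b : Bool, clauseWord c j = some b → v j = b) ↔ ∀ l ∈ c, v l.1 ≠ l.2 := by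
  simp only [clauseWord_eq_some_iff hc]
  constructor
  · rintro hcompat ⟨j, s⟩ hl hsat
    simpa [hsat] using hcompat j (!s) (by simpa using hl)
  · intro hfalsify j b hl
    simpa using hfalsify _ hl

end

/-- A CNF formula `{c_1, ..., c_m}` (no clause containing both a variable and its negation)
is satisfiable iff there exists a word `v ∈ {0,1}^n` not compatible with any of the
partial words `w_1, ..., w_m` associated with the clauses. -/
theorem satisfiable_iff_exists_incompatible_word {n m : ℕ}
    (c : Fin m → Finset (Fin n × Bool))
    (hc : ∀ i : Fin m, ∀ j : Fin n, ¬((j, true) ∈ c i ∧ (j, false) ∈ c i)) :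
    (∃ α : Fin n → Bool, ∀ i : Fin m, ∃ l ∈ c i, α l.1 = l.2) ↔
      (∃ v : Fin n → Bool,
        ∀ i : Fin m, ¬(∀ j : Fin n, ∀ b : Bool, clauseWord (c i) j = some b → v j = b)) :=
  exists_congr fun v => forall_congr' fun i => by
    rw [compatible_clauseWord_iff_falsifies (hc i) v]
    simp only [not_forall, not_not, exists_prop]
end

section
/- Let Sigma be an alphabet, $ a letter not in Sigma, u in Sigma^m with m >= 1, w a word over Sigma, and p an integer with m <= p. For 1 <= i <= m let u_i = u[1:i-1]u[i+1:m] be the word obtained from u by deleting its i-th letter, and set v = w $^{p+1} u_1 $^{p+1} u_2 ... $^{p+1} u_m. Then u is a minimal absent p-subsequence (pMAS) of v if and only if u is p-absent from w. -/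
open List

/-- `v` is a `p`-subsequence of `w`: there is a contiguous factor `u` of `w`
of length at most `p` such that `v` is a subsequence of `u`. -/
def PSubseq {α : Type*} (p : ℕ) (v w : List α) : Prop :=
  ∃ u : List α, u <:+: w ∧ u.length ≤ p ∧ v <+ u

/-- `v` is a minimal absent `p`-subsequence of `w`: `v` is not a `p`-subsequence of `w`,
but every proper subsequence of `v` is a `p`-subsequence of `w`. -/
def PMAS {α : Type*} (p : ℕ) (v w : List α) : Prop :=
  ¬PSubseq p v w ∧ ∀ v' : List α, v' <+ v → v' ≠ v → PSubseq p v' w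

/-
Each block `$^{p+1}` is longer than `p`, so a factor of `v` of length at most `p` lies in
`w $^{p+1}` or in some `$^{p+1} u_i $^{p+1}`. Erasing the `$`s, `u` would then be a
`p`-subsequence of `w`, or a subsequence of the shorter word `u_i`. Conversely, every proper
subsequence of `u` is a subsequence of some `u_i`, a factor of `v` of length `m - 1 ≤ p`.
-/

namespace List

variable {β : Type*}

@[simp]
theorem reduceOption_map_some (l : List β) : (l.map some).reduceOption = l := by
  simp [reduceOption]

theorem IsInfix.reduceOption {l₁ l₂ : List (Option β)} (h : l₁ <:+: l₂) :
    l₁.reduceOption <:+: l₂.reduceOption :=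
  h.filterMap id

theorem Sublist.reduceOption {l₁ l₂ : List (Option β)} (h : l₁ <+ l₂) :
    l₁.reduceOption <+ l₂.reduceOption :=
  h.filterMap id

theorem not_sublist_eraseIdx {l : List β} {i : ℕ} (hi : i < l.length) :
    ¬l <+ l.eraseIdx i := fun h => by
  have := h.length_le
  rw [length_eraseIdx_of_lt hi] at this
  omega

theorem Sublist.exists_sublist_eraseIdx_of_ne {l' l : List β} (h : l' <+ l) (hne : l' ≠ l) :
    ∃ i < l.length, l' <+ l.eraseIdx i := by
  induction h with
  | slnil => exact absurd rfl hne
  | cons a h _ => exact ⟨0, by simp, by simpa using h⟩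
  | cons_cons a _ ih =>
    obtain ⟨i, hi, hsub⟩ := ih fun he => hne (he ▸ rfl)
    exact ⟨i + 1, by simpa using hi, by simpa using hsub.cons_cons a⟩

theorem IsInfix.infix_append_or_infix_append_of_length_le {x A N B : List β}
    (hx : x <:+: A ++ N ++ B) (hlen : x.length ≤ N.length) :
    x <:+: A ++ N ∨ x <:+: N ++ B := by
  obtain ⟨s, t, h⟩ := hx
  by_cases hc : s.length + x.length ≤ A.length + N.length
  · left
    have hpre : s ++ x <+: A ++ N :=
      prefix_of_prefix_length_le ⟨t, h⟩ (prefix_append _ _) (by simpa using hc)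
    exact (suffix_append s x).isInfix.trans hpre.isInfix
  · right
    have hdrop : x ++ t = (N ++ B).drop (s.length - A.length) := by
      have := congrArg (drop s.length) h
      rwa [append_assoc, drop_left, append_assoc, drop_append,
        drop_eq_nil_of_le (by omega), nil_append] at this
    exact (prefix_append x t).isInfix.trans (hdrop ▸ drop_suffix _ _).isInfix

theorem IsInfix.infix_or_exists_of_flatten_sep {x A N : List β} {cs : List (List β)}
    (hx : x <:+: A ++ (cs.map (N ++ ·)).flatten) (hlen : x.length ≤ N.length) :
    x <:+: A ++ N ∨ ∃ c ∈ cs, x <:+: N ++ c ++ N := by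
  induction cs generalizing A with
  | nil => exact .inl (hx.trans (by simpa using (prefix_append A N).isInfix))
  | cons c cs ih =>
    simp only [map_cons, flatten_cons, append_assoc] at hx
    rw [← append_assoc] at hx
    rcases hx.infix_append_or_infix_append_of_length_le hlen with h | h
    · exact .inl h
    · rw [← append_assoc] at h
      rcases ih h with h' | ⟨c', hc', h'⟩
      · exact .inr ⟨c, mem_cons_self, h'⟩
      · exact .inr ⟨c', mem_cons_of_mem _ hc', h'⟩

end List

theorem PSubseq.map {α β : Type*} {p : ℕ} {v w : List α} (f : α → β) (h : PSubseq p v w) :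
    PSubseq p (v.map f) (w.map f) := by
  obtain ⟨x, hx, hlen, hsub⟩ := h
  exact ⟨x.map f, hx.map f, by simpa using hlen, hsub.map f⟩

theorem PSubseq.mono {α : Type*} {p : ℕ} {v w w' : List α} (h : PSubseq p v w)
    (hw : w <:+: w') : PSubseq p v w' := by
  obtain ⟨x, hx, hlen, hsub⟩ := h
  exact ⟨x, hx.trans hw, hlen, hsub⟩

theorem pSubseq_reduceOption_of_map_some_sublist {α : Type*} {p : ℕ} {v : List α}
    {x w : List (Option α)} (hv : v.map some <+ x) (hx : x <:+: w) (hlen : x.length ≤ p) :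
    PSubseq p v w.reduceOption :=
  ⟨x.reduceOption, hx.reduceOption, (length_filterMap_le _ _).trans hlen,
    by simpa using hv.reduceOption⟩

theorem pmas_of_padded_word_iff_absent_general {α : Type*} (u w : List α) (p : ℕ)
    (hp : u.length ≤ p) :
    PMAS p (u.map some)
      ((w.map some : List (Option α)) ++
        (List.ofFn (fun i : Fin u.length =>
          List.replicate (p + 1) (none : Option α) ++ (u.eraseIdx i).map some)).flatten) ↔
      ¬PSubseq p u w := by
  set N : List (Option α) := replicate (p + 1) none
  set cs := ofFn fun i : Fin u.length => (u.eraseIdx i).map some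
  have hv : (ofFn fun i : Fin u.length => N ++ (u.eraseIdx i).map some).flatten =
      (cs.map (N ++ ·)).flatten := by
    rw [map_ofFn]; rfl
  rw [hv]
  refine ⟨fun h hw => h.1 ((hw.map some).mono (prefix_append _ _).isInfix),
    fun habs => ⟨?_, fun v' hv' hne => ?_⟩⟩
  · rintro ⟨x, hx, hlen, hux⟩
    rcases hx.infix_or_exists_of_flatten_sep (by simp [N]; omega) with hw | ⟨c, hc, hc'⟩
    · exact habs (by
        simpa [N, reduceOption_append, reduceOption_replicate_none] using
          pSubseq_reduceOption_of_map_some_sublist hux hw hlen)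
    · obtain ⟨i, rfl⟩ := mem_ofFn.1 hc
      refine not_sublist_eraseIdx i.isLt ?_
      simpa [N, reduceOption_append, reduceOption_replicate_none] using
        (hux.trans hc'.sublist).reduceOption
  · obtain ⟨u', hu', rfl⟩ := sublist_map_iff.mp hv'
    obtain ⟨i, hi, hsub⟩ := hu'.exists_sublist_eraseIdx_of_ne (by rintro rfl; exact hne rfl)
    have hmem : N ++ (u.eraseIdx i).map some ∈ cs.map (N ++ ·) :=
      mem_map_of_mem (mem_ofFn.2 ⟨⟨i, hi⟩, rfl⟩)
    refine ⟨(u.eraseIdx i).map some, ?_, ?_, hsub.map some⟩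
    · exact ((suffix_append _ _).isInfix.trans (infix_of_mem_flatten hmem)).trans
        (suffix_append _ _).isInfix
    · rw [length_map, length_eraseIdx_of_lt hi]
      omega

/-- Words over `Σ ∪ {$}` are modelled as lists over `Option α`, where the extra letter `$`
is `none` and letters of `Σ` are embedded by `some`. Let `u ∈ Σ^m` with `m ≥ 1`, `w` a word
over `Σ`, and `m ≤ p`. Set `v = w $^{p+1} u_1 $^{p+1} u_2 ... $^{p+1} u_m`, where `u_i` is
obtained from `u` by deleting its `i`-th letter. Then `u` is a minimal absent
`p`-subsequence of `v` iff `u` is `p`-absent from `w`. -/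
theorem pmas_of_padded_word_iff_absent {α : Type*} (u w : List α) (p : ℕ)
    (hm : 1 ≤ u.length) (hp : u.length ≤ p) :
    PMAS p (u.map some)
      ((w.map some : List (Option α)) ++
        (List.ofFn (fun i : Fin u.length =>
          List.replicate (p + 1) (none : Option α) ++ (u.eraseIdx i).map some)).flatten) ↔
      ¬PSubseq p u w :=
  pmas_of_padded_word_iff_absent_general u w p hp
end

section
/- Let Sigma be a finite alphabet with sigma letters, $ a letter not in Sigma, and phi the morphism on words over Sigma defined by phi(a) = a $^{sigma-1} for each a in Sigma. Then for every word u over Sigma, every word w over Sigma, and every integer p_0 >= 1: u is a p_0-subsequence of w if and only if u is a (p_0 * sigma)-subsequence of phi(w). -/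
open List

/-- The morphism `phi(a) = a $^{σ-1}`, where words over `Σ ∪ {$}` are modelled as lists
over `Option α` (`$` is `none`, letters of `Σ` are embedded by `some`), and `σ` is the
number of letters of `Σ`. -/
def phi {α : Type*} [Fintype α] (w : List α) : List (Option α) :=
  w.flatMap (fun a => some a :: List.replicate (Fintype.card α - 1) (none : Option α))

/-!
Every letter of `phi w` from `Σ` is followed by `σ - 1` copies of `$`, so the letters of `Σ` in
a factor of `phi w` lie `σ` apart and form a factor of `w`: a factor of length at most `p₀ σ`
carries at most `p₀` of them. Conversely, `phi` maps a factor of `w` of length at most `p₀` to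
a factor of `phi w` of length at most `p₀ σ` that contains the image of each of its subsequences.
-/

namespace List

variable {α : Type*}

def padNone (m : ℕ) (w : List α) : List (Option α) :=
  w.flatMap fun a => some a :: replicate m none

@[simp]
lemma padNone_nil (m : ℕ) : padNone m ([] : List α) = [] := rfl

@[simp]
lemma padNone_cons (m : ℕ) (a : α) (w : List α) :
    padNone m (a :: w) = some a :: (replicate m none ++ padNone m w) := by
  simp [padNone]

lemma length_padNone (m : ℕ) (w : List α) : (padNone m w).length = (m + 1) * w.length := by
  induction w with
  | nil => simp
  | cons a w ih =>
    simp only [padNone_cons, length_cons, length_append, length_replicate, ih]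
    ring

@[simp]
lemma reduceOption_padNone (m : ℕ) (w : List α) : (padNone m w).reduceOption = w := by
  induction w with
  | nil => rfl
  | cons a w ih => simp [reduceOption_append, reduceOption_replicate_none, ih]

lemma map_some_sublist_padNone (m : ℕ) (w : List α) : w.map some <+ padNone m w := by
  induction w with
  | nil => simp
  | cons a w ih => exact (ih.trans (sublist_append_right _ _)).cons_cons _

lemma IsInfix.padNone {v w : List α} (h : v <:+: w) (m : ℕ) :
    List.padNone m v <:+: List.padNone m w :=
  h.flatMap _

lemma reduceOption_eq_nil_of_infix_replicate_none {l : List (Option α)} {n : ℕ}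
    (h : l <:+: replicate n none) : l.reduceOption = [] := by
  rw [(infix_replicate_iff.mp h).2, reduceOption_replicate_none]

lemma IsPrefix.succ_mul_length_reduceOption_le {m : ℕ} {w : List α} {x : List (Option α)}
    (h : x <+: padNone m w) : (m + 1) * x.reduceOption.length ≤ x.length + m := by
  induction w generalizing x with
  | nil => simp_all
  | cons a w ih =>
    rw [padNone_cons, prefix_cons_iff] at h
    obtain rfl | ⟨t, rfl, ht⟩ := h
    · simp
    rcases prefix_or_prefix_of_prefix ht (prefix_append (replicate m none) (padNone m w)) with
      hnone | ⟨t', rfl⟩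
    · simp [reduceOption_cons_of_some, reduceOption_eq_nil_of_infix_replicate_none hnone.isInfix]
    · have := ih ((prefix_append_right_inj _).mp ht)
      simp only [reduceOption_cons_of_some, reduceOption_append, reduceOption_replicate_none,
        nil_append, length_cons, length_append, length_replicate]
      linarith

lemma IsInfix.succ_mul_length_reduceOption_le {m : ℕ} {w : List α} {x : List (Option α)}
    (h : x <:+: List.padNone m w) : (m + 1) * x.reduceOption.length ≤ x.length + m := by
  induction w generalizing x with
  | nil => simp_all
  | cons a w ih =>
    rw [padNone_cons, infix_cons_iff, ← padNone_cons] at h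
    rcases h with hpre | h
    · exact hpre.succ_mul_length_reduceOption_le
    rcases infix_append_iff.mp h with hnone | h | ⟨l₁, l₂, rfl, hnone, hpre⟩
    · simp [reduceOption_eq_nil_of_infix_replicate_none hnone]
    · exact ih h
    · have := hpre.succ_mul_length_reduceOption_le
      rw [reduceOption_append, reduceOption_eq_nil_of_infix_replicate_none hnone.isInfix,
        nil_append, length_append]
      omega

end List

lemma phi_eq_padNone {α : Type*} [Fintype α] (w : List α) :
    phi w = padNone (Fintype.card α - 1) w :=
  rfl

lemma psubseq_nil_left {α : Type*} (p : ℕ) (w : List α) : PSubseq p [] w :=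
  ⟨[], nil_infix, Nat.zero_le p, Sublist.refl []⟩

lemma PSubseq.map_some_padNone {α : Type*} {p : ℕ} {u w : List α} (h : PSubseq p u w)
    (m : ℕ) : PSubseq (p * (m + 1)) (u.map some) (padNone m w) := by
  obtain ⟨v, hv, hlen, hs⟩ := h
  refine ⟨padNone m v, hv.padNone m, ?_, (hs.map some).trans (map_some_sublist_padNone m v)⟩
  rw [length_padNone, mul_comm]
  exact Nat.mul_le_mul_right _ hlen

lemma PSubseq.of_map_some_padNone {α : Type*} {p m : ℕ} {u w : List α}
    (h : PSubseq (p * (m + 1)) (u.map some) (padNone m w)) : PSubseq p u w := by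
  obtain ⟨x, hx, hlen, hs⟩ := h
  refine ⟨x.reduceOption, reduceOption_padNone m w ▸ hx.filterMap id, ?_, ?_⟩
  · have hcount := hx.succ_mul_length_reduceOption_le
    nlinarith
  · simpa [reduceOption, filterMap_map] using hs.filterMap id

theorem psubseq_iff_psubseq_phi_general {α : Type*} [Fintype α] (u w : List α) (p₀ : ℕ) :
    PSubseq p₀ u w ↔ PSubseq (p₀ * Fintype.card α) (u.map some) (phi w) := by
  -- `σ - 1 + 1 = σ` fails only for the empty alphabet, where both sides hold trivially.
  rcases isEmpty_or_nonempty α with _ | _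
  · rw [Subsingleton.elim u [], Subsingleton.elim w []]
    exact iff_of_true (psubseq_nil_left _ _) (psubseq_nil_left _ _)
  · rw [phi_eq_padNone, ← Nat.sub_add_cancel (Fintype.card_pos (α := α))]
    exact ⟨fun h => h.map_some_padNone _, PSubseq.of_map_some_padNone⟩

/-- For every word `u` over `Σ`, every word `w` over `Σ`, and every integer `p₀ ≥ 1`:
`u` is a `p₀`-subsequence of `w` iff `u` is a `(p₀ * σ)`-subsequence of `phi(w)`. -/
theorem psubseq_iff_psubseq_phi {α : Type*} [Fintype α] (u w : List α) (p₀ : ℕ)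
    (hp : 1 ≤ p₀) :
    PSubseq p₀ u w ↔ PSubseq (p₀ * Fintype.card α) (u.map some) (phi w) :=
  psubseq_iff_psubseq_phi_general u w p₀
end

section
/- Let Sigma be a finite alphabet, let u in Sigma^m with m >= 1, and for 1 <= i <= m-1 let u_i be a word of length |Sigma| in which every letter of Sigma occurs exactly once and whose last letter is u[i]. Then u is not a subsequence of the concatenation u_1 u_2 ... u_{m-1}. -/
/-!
The letter `u[0]` occurs in the block `u_1` only as its last letter, so however `u` is embedded
into `u_1 ⋯ u_{m-1}`, the rest of `u` is embedded into `u_2 ⋯ u_{m-1}`. Iterating, each block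
absorbs at most one letter of `u`, and the `m - 1` blocks cannot absorb all `m` letters.
-/

open List

namespace List

variable {α : Type*}

theorem cons_sublist_append_iff_of_not_mem {a : α} {l l₁ l₂ : List α} (h : a ∉ l₁) :
    a :: l <+ l₁ ++ l₂ ↔ a :: l <+ l₂ := by
  induction l₁ with
  | nil => rfl
  | cons x l₁ ih =>
    rw [mem_cons, not_or] at h
    exact ⟨fun hs => ih h.2 |>.mp (hs.of_cons_of_ne h.1), fun hs => (ih h.2 |>.mpr hs).cons x⟩

theorem sublist_of_cons_sublist_append_of_count_eq_one [DecidableEq α] {a : α} {l b rest : List α}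
    (hcount : b.count a = 1) (hlast : b.getLast? = some a) (h : a :: l <+ b ++ rest) :
    l <+ rest := by
  obtain ⟨b', rfl⟩ := getLast?_eq_some_iff.mp hlast
  have ha : a ∉ b' := by
    rw [← count_eq_zero]
    simpa [count_append] using hcount
  rw [append_assoc, singleton_append, cons_sublist_append_iff_of_not_mem ha,
    cons_sublist_cons] at h
  exact h

theorem not_sublist_flatten_of_getLast_count_eq_one [DecidableEq α] (bs : List (List α))
    {v : List α} (hlen : bs.length < v.length)
    (hblock : ∀ i (hi : i < bs.length) (hv : i < v.length),
      bs[i].count v[i] = 1 ∧ bs[i].getLast? = some v[i]) :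
    ¬ v <+ bs.flatten := by
  induction bs generalizing v with
  | nil =>
    obtain ⟨a, v, rfl⟩ := exists_cons_of_length_pos hlen
    simp
  | cons b bs ih =>
    obtain ⟨a, v, rfl⟩ := exists_cons_of_length_pos (Nat.zero_lt_of_lt hlen)
    intro h
    obtain ⟨hcount, hlast⟩ := hblock 0 (by simp) (by simp)
    refine ih (by simpa using hlen) (fun i hi hv => ?_)
      (sublist_of_cons_sublist_append_of_count_eq_one hcount hlast h)
    exact hblock (i + 1) (Nat.succ_lt_succ hi) (Nat.succ_lt_succ hv)

end List

theorem not_sublist_of_permutation_blocks_general {α : Type*} [DecidableEq α]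
    (u : List α) (hm : 1 ≤ u.length)
    (ui : Fin (u.length - 1) → List α)
    (hcount : ∀ i : Fin (u.length - 1), ∀ a : α, (ui i).count a = 1)
    (hlast : ∀ i : Fin (u.length - 1),
      (ui i).getLast? = some (u.get (i.castLE (Nat.sub_le u.length 1)))) :
    ¬ u <+ (List.ofFn ui).flatten := by
  refine not_sublist_flatten_of_getLast_count_eq_one _ (by rw [length_ofFn]; omega) fun i hi _ => ?_
  rw [length_ofFn] at hi
  simpa using ⟨hcount ⟨i, hi⟩ u[i], hlast ⟨i, hi⟩⟩

/-- Let `Σ` be a finite alphabet, `u ∈ Σ^m` with `m ≥ 1`, and for `1 ≤ i ≤ m-1` let `u_i`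
be a word in which every letter of `Σ` occurs exactly once (hence of length `|Σ|`) and whose
last letter is `u[i]`. Then `u` is not a subsequence of `u_1 u_2 ... u_{m-1}`. -/
theorem not_sublist_of_permutation_blocks {α : Type*} [Fintype α] [DecidableEq α]
    (u : List α) (hm : 1 ≤ u.length)
    (ui : Fin (u.length - 1) → List α)
    (hcount : ∀ i : Fin (u.length - 1), ∀ a : α, (ui i).count a = 1)
    (hlast : ∀ i : Fin (u.length - 1),
      (ui i).getLast? = some (u.get (i.castLE (Nat.sub_le u.length 1)))) :
    ¬ u <+ (List.ofFn ui).flatten :=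
  not_sublist_of_permutation_blocks_general u hm ui hcount hlast
end
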